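/- Let P, W ⊆ ℝ² be finite and let a, b, c ∈ P be pairwise distinct points such that all three of ab, bc, ca are edges of the witness Gabriel graph GG⁻(P,W). Then any two distinct points of P lying in the triangle convexHull{a,b,c} are adjacent in GG⁻(P,W); in particular the points of P in the triangle, together with a, b, c, induce a complete subgraph. -/

import Mathlib

/-!
By Thales, `x` lies in the disk with diameter `uv` iff `⟪x - u, x - v⟫ ≤ 0`. For fixed `x` and
`v ≠ x`, the set of `u` for which `x` avoids the punctured disk is an open half-space with its
boundary point `x` added, hence convex. Using this in each endpoint, a point avoiding the punctured
disks of all pairs from `S` avoids those of all pairs from `convexHull ℝ S`: the pairs joined in a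
witness Gabriel graph form a relation closed under convex hulls, and the triangle `abc` is the
convex hull of `{a, b, c}`, whose pairs are edges or loops.
-/

open scoped RealInnerProductSpace

noncomputable section

/-- The Euclidean plane. -/
abbrev Pt := EuclideanSpace ℝ (Fin 2)

/-- The closed disk with diameter `ab`. -/
def diskD (a b : Pt) : Set Pt := Metric.closedBall (midpoint ℝ a b) (dist a b / 2)

/-- `a` and `b` are adjacent in the witness Gabriel graph with witness set `W`. -/
def gabrielEdge (W : Set Pt) (a b : Pt) : Prop := (diskD a b \ {a, b}) ∩ W = ∅

/-- General position: no three points collinear, no four points concyclic. -/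
def GenPos (S : Set Pt) : Prop :=
  (∀ a ∈ S, ∀ b ∈ S, ∀ c ∈ S, a ≠ b → a ≠ c → b ≠ c → ¬ Collinear ℝ ({a, b, c} : Set Pt)) ∧
  (∀ a ∈ S, ∀ b ∈ S, ∀ c ∈ S, ∀ d ∈ S, a ≠ b → a ≠ c → a ≠ d → b ≠ c → b ≠ d → c ≠ d →
    ¬ EuclideanGeometry.Cospherical ({a, b, c, d} : Set Pt))

/-- Planar determinant `u₁v₂ − u₂v₁`. -/
def det2 (u v : Pt) : ℝ := u 0 * v 1 - u 1 * v 0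

/-- Counterclockwise convex position. -/
def CCWConvexPos {m : ℕ} (q : Fin m → Pt) : Prop :=
  ∀ i j k : Fin m, i < j → j < k → 0 < det2 (q j - q i) (q k - q i)

/-- Cyclic successor in `Fin m`. -/
def cyclicSucc {m : ℕ} (hm : 0 < m) (i : Fin m) : Fin m :=
  ⟨((i : ℕ) + 1) % m, Nat.mod_lt _ hm⟩

section InnerProductSpace

variable {E : Type*} [NormedAddCommGroup E] [InnerProductSpace ℝ E]

theorem inner_sub_sub_eq_norm_sub_midpoint_sq (a b x : E) :
    ⟪x - a, x - b⟫ = ‖x - midpoint ℝ a b‖ ^ 2 - (dist a b / 2) ^ 2 := by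
  rw [dist_eq_norm, div_pow, ← real_inner_self_eq_norm_sq, ← real_inner_self_eq_norm_sq,
    midpoint_eq_smul_add, invOf_eq_inv]
  simp only [inner_sub_left, inner_sub_right, inner_add_left, inner_add_right,
    real_inner_smul_left, real_inner_smul_right, real_inner_comm a b, real_inner_comm a x,
    real_inner_comm b x]
  ring

/-- The closed disk with diameter `uv` minus `u` and `v`, described through Thales' theorem
(see `inner_sub_sub_eq_norm_sub_midpoint_sq`). -/
def puncturedThalesDisk (u v : E) : Set E := {x | ⟪x - u, x - v⟫ ≤ 0} \ {u, v}

theorem puncturedThalesDisk_comm (u v : E) :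
    puncturedThalesDisk u v = puncturedThalesDisk v u := by
  simp only [puncturedThalesDisk, real_inner_comm, Set.pair_comm]

theorem puncturedThalesDisk_self (u : E) : puncturedThalesDisk u u = ∅ :=
  Set.eq_empty_of_forall_notMem fun _ ⟨hx, hxu⟩ =>
    hxu (Or.inl (sub_eq_zero.mp (real_inner_self_nonpos.mp hx)))

theorem convex_setOf_eq_or_inner_pos (x w : E) : Convex ℝ {u : E | u = x ∨ 0 < ⟪x - u, w⟫} := by
  set K := {u : E | u = x ∨ 0 < ⟪x - u, w⟫}
  have hnonneg : ∀ y ∈ K, 0 ≤ ⟪x - y, w⟫ := by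
    rintro y (rfl | hy)
    · simp
    · exact hy.le
  have hzero : ∀ y ∈ K, ∀ c : ℝ, c * ⟪x - y, w⟫ = 0 → c • (x - y) = 0 := by
    rintro y (rfl | hy) c h
    · simp
    · simp [(mul_eq_zero.mp h).resolve_right hy.ne']
  intro u hu v hv s t hs ht hst
  have hsub : x - (s • u + t • v) = s • (x - u) + t • (x - v) := by
    calc x - (s • u + t • v) = (s + t) • x - (s • u + t • v) := by rw [hst, one_smul]
      _ = s • (x - u) + t • (x - v) := by module
  by_contra hmem
  simp only [K, Set.mem_ofPred_eq, not_or, not_lt, hsub, inner_add_left,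
    real_inner_smul_left] at hmem
  obtain ⟨hne, hle⟩ := hmem
  have hu0 := mul_nonneg hs (hnonneg u hu)
  have hv0 := mul_nonneg ht (hnonneg v hv)
  apply hne
  rw [← sub_eq_zero, ← neg_sub, neg_eq_zero, hsub, hzero u hu s (by linarith),
    hzero v hv t (by linarith), add_zero]

theorem convex_setOf_notMem_puncturedThalesDisk (x v : E) :
    Convex ℝ {u | x ∉ puncturedThalesDisk u v} := by
  by_cases hxv : x = v
  · convert convex_univ (𝕜 := ℝ) (E := E)
    exact Set.eq_univ_of_forall fun u => by simp [puncturedThalesDisk, hxv]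
  · convert convex_setOf_eq_or_inner_pos x (x - v) using 2 with u
    simp [puncturedThalesDisk, hxv, eq_comm (a := x), imp_iff_not_or, or_comm]

theorem exists_mem_puncturedThalesDisk_of_mem_convexHull {S : Set E} {p q x : E}
    (hp : p ∈ convexHull ℝ S) (hq : q ∈ convexHull ℝ S) (hx : x ∈ puncturedThalesDisk p q) :
    ∃ u ∈ S, ∃ v ∈ S, x ∈ puncturedThalesDisk u v := by
  by_contra! h
  have hpS : ∀ v ∈ S, x ∉ puncturedThalesDisk p v := fun v hv =>
    convexHull_min (fun u hu => h u hu v hv) (convex_setOf_notMem_puncturedThalesDisk x v) hp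
  refine convexHull_min (t := {v | x ∉ puncturedThalesDisk v p}) (fun v hv => ?_)
    (convex_setOf_notMem_puncturedThalesDisk x p) hq ?_
  · rw [Set.mem_ofPred_eq, puncturedThalesDisk_comm]
    exact hpS v hv
  · simpa only [Set.mem_ofPred_eq, not_not, puncturedThalesDisk_comm q p] using hx

end InnerProductSpace

theorem mem_diskD_iff {a b x : Pt} : x ∈ diskD a b ↔ ⟪x - a, x - b⟫ ≤ 0 := by
  rw [diskD, Metric.mem_closedBall, inner_sub_sub_eq_norm_sub_midpoint_sq, sub_nonpos,
    dist_eq_norm, pow_le_pow_iff_left₀ (norm_nonneg _) (by positivity) two_ne_zero]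

theorem gabrielEdge_iff {W : Set Pt} {a b : Pt} :
    gabrielEdge W a b ↔ Disjoint (puncturedThalesDisk a b) W := by
  rw [gabrielEdge, ← Set.disjoint_iff_inter_eq_empty, puncturedThalesDisk]
  congr! 3
  exact Set.ext fun x => mem_diskD_iff

theorem gabrielEdge_self (W : Set Pt) (a : Pt) : gabrielEdge W a a := by
  simp [gabrielEdge_iff, puncturedThalesDisk_self]

theorem gabrielEdge_comm {W : Set Pt} {a b : Pt} : gabrielEdge W a b ↔ gabrielEdge W b a := by
  rw [gabrielEdge_iff, gabrielEdge_iff, puncturedThalesDisk_comm]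

theorem gabrielEdge_of_mem_convexHull {W S : Set Pt} {p q : Pt}
    (hS : ∀ u ∈ S, ∀ v ∈ S, gabrielEdge W u v) (hp : p ∈ convexHull ℝ S)
    (hq : q ∈ convexHull ℝ S) : gabrielEdge W p q := by
  rw [gabrielEdge_iff, Set.disjoint_left]
  intro x hx hxW
  obtain ⟨u, hu, v, hv, hxuv⟩ := exists_mem_puncturedThalesDisk_of_mem_convexHull hp hq hx
  exact Set.disjoint_left.mp (gabrielEdge_iff.mp (hS u hu v hv)) hxuv hxW

theorem triangle_subgraph_complete_general
    (P W : Finset Pt) (a b c : Pt)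
    (eab : gabrielEdge (W : Set Pt) a b) (ebc : gabrielEdge (W : Set Pt) b c)
    (eca : gabrielEdge (W : Set Pt) c a) :
    ∀ p ∈ P, ∀ q ∈ P, p ≠ q →
      p ∈ convexHull ℝ ({a, b, c} : Set Pt) →
      q ∈ convexHull ℝ ({a, b, c} : Set Pt) →
      gabrielEdge (W : Set Pt) p q := by
  intro p _ q _ _ hp hq
  refine gabrielEdge_of_mem_convexHull (fun u hu v hv => ?_) hp hq
  simp only [Set.mem_insert_iff, Set.mem_singleton_iff] at hu hv
  rcases hu with rfl | rfl | rfl <;> rcases hv with rfl | rfl | rfl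
  exacts [gabrielEdge_self _ _, eab, gabrielEdge_comm.mp eca, gabrielEdge_comm.mp eab,
    gabrielEdge_self _ _, ebc, eca, gabrielEdge_comm.mp ebc, gabrielEdge_self _ _]

/-- If a triangle `abc` is a subgraph of a witness Gabriel graph, then all
vertices inside the triangle (together with `a,b,c`) form a complete subgraph. -/
theorem triangle_subgraph_complete
    (P W : Finset Pt) (a b c : Pt) (ha : a ∈ P) (hb : b ∈ P) (hc : c ∈ P)
    (hab : a ≠ b) (hbc : b ≠ c) (hac : a ≠ c)
    (eab : gabrielEdge (W : Set Pt) a b) (ebc : gabrielEdge (W : Set Pt) b c)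
    (eca : gabrielEdge (W : Set Pt) c a) :
    ∀ p ∈ P, ∀ q ∈ P, p ≠ q →
      p ∈ convexHull ℝ ({a, b, c} : Set Pt) →
      q ∈ convexHull ℝ ({a, b, c} : Set Pt) →
      gabrielEdge (W : Set Pt) p q :=
  triangle_subgraph_complete_general P W a b c eab ebc eca
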